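/- arXiv:2409.14915 — 5 statements merged into one kernel-verified Lean document; each statement's English description precedes it below -/
import Mathlib

section
/- An equivalence relation δ on a lattice L is a local congruence if and only if for all a, b, c ∈ L with (a,b) ∈ δ and a ∧ b ≤ c ≤ a ∨ b, it holds that (a ∨ c, b ∨ c) ∈ δ and (a ∧ c, b ∧ c) ∈ δ. -/
/-!
The class of `a` under a local congruence is a convex sublattice containing `a` and `b`, so it
contains every `c` between `a ⊓ b` and `a ⊔ b`, hence also `a ⊔ c`, `b ⊔ c`, `a ⊓ c` and `b ⊓ c`.
Conversely, taking `c = a` in the condition gives `δ a (a ⊔ b)` and `δ a (a ⊓ b)`, which makes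
classes sublattices, and for `a ≤ c ≤ b` it gives `δ c b`, which makes them convex.
-/

variable {L : Type*}

def LocalCong [Lattice L] (δ : L → L → Prop) : Prop :=
  Equivalence δ ∧
  (∀ x a b, δ x a → δ x b → δ x (a ⊔ b) ∧ δ x (a ⊓ b)) ∧
  (∀ x a b c, δ x a → δ x b → a ≤ c → c ≤ b → δ x c)

section

variable [Lattice L] {δ : L → L → Prop}

def IntervalCompatible (δ : L → L → Prop) : Prop :=
  ∀ a b c, δ a b → a ⊓ b ≤ c → c ≤ a ⊔ b → δ (a ⊔ c) (b ⊔ c) ∧ δ (a ⊓ c) (b ⊓ c)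

namespace LocalCong

variable {a b c x : L}

theorem rel_sup (hδ : LocalCong δ) (hxa : δ x a) (hxb : δ x b) : δ x (a ⊔ b) :=
  (hδ.2.1 x a b hxa hxb).1

theorem rel_inf (hδ : LocalCong δ) (hxa : δ x a) (hxb : δ x b) : δ x (a ⊓ b) :=
  (hδ.2.1 x a b hxa hxb).2

theorem rel_of_inf_le_of_le_sup (hδ : LocalCong δ) (hab : δ a b)
    (hc₁ : a ⊓ b ≤ c) (hc₂ : c ≤ a ⊔ b) : δ a c :=
  have ha : δ a a := hδ.1.refl a
  hδ.2.2 a _ _ c (hδ.rel_inf ha hab) (hδ.rel_sup ha hab) hc₁ hc₂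

theorem intervalCompatible (hδ : LocalCong δ) : IntervalCompatible δ := by
  intro a b c hab hc₁ hc₂
  have hac := hδ.rel_of_inf_le_of_le_sup hab hc₁ hc₂
  have ha : δ a a := hδ.1.refl a
  exact ⟨hδ.1.trans (hδ.1.symm (hδ.rel_sup ha hac)) (hδ.rel_sup hab hac),
    hδ.1.trans (hδ.1.symm (hδ.rel_inf ha hac)) (hδ.rel_inf hab hac)⟩

end LocalCong

namespace IntervalCompatible

variable {a b c : L}

theorem rel_sup_right (hδ : IntervalCompatible δ) (hab : δ a b) : δ a (a ⊔ b) := by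
  simpa only [sup_idem, sup_comm b] using (hδ a b a hab inf_le_left le_sup_left).1

theorem rel_inf_right (hδ : IntervalCompatible δ) (hab : δ a b) : δ a (a ⊓ b) := by
  simpa only [inf_idem, inf_comm b] using (hδ a b a hab inf_le_left le_sup_left).2

theorem rel_of_le_of_le (hδ : IntervalCompatible δ) (hab : δ a b)
    (hac : a ≤ c) (hcb : c ≤ b) : δ c b := by
  simpa only [sup_eq_right.2 hac, sup_eq_left.2 hcb] using
    (hδ a b c hab (inf_le_left.trans hac) (hcb.trans le_sup_right)).1

theorem localCong (hδ : IntervalCompatible δ) (hE : Equivalence δ) : LocalCong δ := by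
  refine ⟨hE, fun x a b hxa hxb => ?_, fun x a b c hxa hxb hac hcb => ?_⟩
  · have hab : δ a b := hE.trans (hE.symm hxa) hxb
    exact ⟨hE.trans hxa (hδ.rel_sup_right hab), hE.trans hxa (hδ.rel_inf_right hab)⟩
  · exact hE.trans hxb (hE.symm (hδ.rel_of_le_of_le (hE.trans (hE.symm hxa) hxb) hac hcb))

end IntervalCompatible

end

theorem stmt1 [Lattice L] (δ : L → L → Prop) (hE : Equivalence δ) :
    LocalCong δ ↔
      (∀ a b c, δ a b → a ⊓ b ≤ c → c ≤ a ⊔ b →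
        δ (a ⊔ c) (b ⊔ c) ∧ δ (a ⊓ c) (b ⊓ c)) :=
  ⟨LocalCong.intervalCompatible, fun h => IntervalCompatible.localCong h hE⟩
end

section
/- The set of all local congruences on a lattice L, ordered by inclusion, forms a complete lattice, where the infimum of a family is its intersection. -/
/-! Local congruences are closed under arbitrary intersections, and an intersection of relations
is their greatest lower bound under inclusion. A partial order with all infima is a complete
lattice, the supremum of a family being the infimum of its upper bounds. -/

variable {L : Type*}

namespace LocalCong

variable [Lattice L]

theorem sInter (T : Set {δ : L → L → Prop // LocalCong δ}) :
    LocalCong (fun x y => ∀ δ ∈ T, δ.1 x y) := by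
  refine ⟨⟨fun x δ _ => δ.2.1.refl x, fun h δ hδ => δ.2.1.symm (h δ hδ),
      fun h h' δ hδ => δ.2.1.trans (h δ hδ) (h' δ hδ)⟩, ?_, ?_⟩
  · intro x a b ha hb
    exact ⟨fun δ hδ => (δ.2.2.1 x a b (ha δ hδ) (hb δ hδ)).1,
      fun δ hδ => (δ.2.2.1 x a b (ha δ hδ) (hb δ hδ)).2⟩
  · intro x a b c ha hb hac hcb δ hδ
    exact δ.2.2.2 x a b c (ha δ hδ) (hb δ hδ) hac hcb

instance : InfSet {δ : L → L → Prop // LocalCong δ} :=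
  ⟨fun T => ⟨fun x y => ∀ δ ∈ T, δ.1 x y, sInter T⟩⟩

theorem isGLB_sInf (T : Set {δ : L → L → Prop // LocalCong δ}) : IsGLB T (sInf T) :=
  ⟨fun δ hδ _ _ h => h δ hδ, fun _ hδ _ _ h _ hε => hδ hε _ _ h⟩

instance : CompleteLattice {δ : L → L → Prop // LocalCong δ} :=
  completeLatticeOfInf _ isGLB_sInf

end LocalCong

theorem stmt8 [Lattice L] (S : Set {δ : L → L → Prop // LocalCong δ}) :
    (∃ g : {δ : L → L → Prop // LocalCong δ},
      g.1 = (fun x y => ∀ δ ∈ S, δ.1 x y) ∧ IsGLB S g) ∧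
    (∃ l : {δ : L → L → Prop // LocalCong δ}, IsLUB S l) := by
  exact ⟨⟨sInf S, rfl, LocalCong.isGLB_sInf S⟩, ⟨sSup S, isLUB_sSup S⟩⟩
end

section
/- Let δ be a local congruence on a lattice L. The preorder ≼_δ on the quotient L/δ, defined by [x]_δ ≼_δ [y]_δ iff there is a δ-sequence from some element of [x]_δ to some element of [y]_δ, is a partial order (i.e., antisymmetric) if and only if every δ-cycle in L is closed. -/
/-!
Since `δ` is reflexive and symmetric, `[x] ≼_δ [y]` holds exactly when `y` is reachable from `x`
by a `δ`-sequence. Two elements lie on a common `δ`-cycle iff each is reachable from the other: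
a cycle can be traversed from any of its elements to any other, and two sequences `x ⇝ y ⇝ x`
concatenate to a cycle. Antisymmetry of `≼_δ` and closedness of all cycles are therefore the
same condition.
-/

variable {L : Type*}

def lstep [Lattice L] (δ : L → L → Prop) : L → L → Prop :=
  fun a b => δ a b ∨ a ≤ b

def classLe [Lattice L] (δ : L → L → Prop) (x y : L) : Prop :=
  ∃ x' y', δ x x' ∧ δ y y' ∧ Relation.ReflTransGen (lstep δ) x' y'

def ClosedCycles [Lattice L] (δ : L → L → Prop) : Prop :=
  ∀ l : List L, l.Chain' (lstep δ) → 2 ≤ l.length → l.head? = l.getLast? →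
    ∀ a ∈ l, ∀ b ∈ l, δ a b

namespace List

variable {α : Type*} {r : α → α → Prop}

theorem IsChain.reflTransGen_getLast {l : List α} (hl : l.IsChain r) (hne : l ≠ []) {a : α}
    (ha : a ∈ l) : Relation.ReflTransGen r a (l.getLast hne) :=
  hl.backwards_induction (Relation.ReflTransGen r · (l.getLast hne)) l
    (fun _ _ hxy hy => hy.head hxy) (fun _ => .refl) a ha

theorem IsChain.reflTransGen_head {l : List α} (hl : l.IsChain r) (hne : l ≠ []) {b : α}
    (hb : b ∈ l) : Relation.ReflTransGen r (l.head hne) b :=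
  hl.induction (Relation.ReflTransGen r (l.head hne) ·) l
    (fun _ _ hxy hx => hx.tail hxy) (fun _ => .refl) b hb

theorem IsChain.reflTransGen_of_head?_eq_getLast? {l : List α} (hl : l.IsChain r)
    (hcyc : l.head? = l.getLast?) {a b : α} (ha : a ∈ l) (hb : b ∈ l) :
    Relation.ReflTransGen r a b := by
  have hne : l ≠ [] := ne_nil_of_mem ha
  have hends : l.getLast hne = l.head hne := by
    simpa [head?_eq_some_head hne, getLast?_eq_some_getLast hne] using hcyc.symm
  exact (hl.reflTransGen_getLast hne ha).trans (hends ▸ hl.reflTransGen_head hne hb)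

theorem exists_isChain_cycle_of_reflTransGen (hr : ∀ a, r a a) {a b : α}
    (hab : Relation.ReflTransGen r a b) (hba : Relation.ReflTransGen r b a) :
    ∃ l : List α, l.IsChain r ∧ 2 ≤ l.length ∧ l.head? = l.getLast? ∧ a ∈ l ∧ b ∈ l := by
  obtain ⟨l₁, hl₁, hlast₁⟩ := exists_isChain_cons_of_relationReflTransGen hab
  obtain ⟨l₂, hl₂, hlast₂⟩ := exists_isChain_cons_of_relationReflTransGen hba
  -- the closing step `a → a` keeps the cycle of length at least two when `a = b`
  have hback : (b :: (l₂ ++ [a])).IsChain r := by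
    rw [← cons_append]
    exact hl₂.append (.singleton a) (by simp [getLast?_eq_some_getLast, hlast₂, hr])
  refine ⟨(a :: l₁) ++ (l₂ ++ [a]), hl₁.append hback.tail ?_, by simp; omega, ?_, by simp, ?_⟩
  · intro x hx y hy
    rw [getLast?_eq_some_getLast (cons_ne_nil _ _), hlast₁, Option.mem_some_iff] at hx
    exact hx ▸ hback.rel_head? hy
  · rw [← append_assoc, getLast?_concat]
    rfl
  · exact mem_append_left _ (hlast₁ ▸ getLast_mem _)

end List

section

variable [Lattice L] {δ : L → L → Prop}

theorem lstep_refl (a : L) : lstep δ a a := Or.inr le_rfl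

theorem classLe_iff_reflTransGen (hδ : Equivalence δ) {x y : L} :
    classLe δ x y ↔ Relation.ReflTransGen (lstep δ) x y := by
  constructor
  · rintro ⟨x', y', hxx', hyy', hpath⟩
    exact (hpath.tail (Or.inl (hδ.symm hyy'))).head (Or.inl hxx')
  · exact fun hpath => ⟨x, y, hδ.refl x, hδ.refl y, hpath⟩

end

theorem stmt13 [Lattice L] (δ : L → L → Prop) (h : LocalCong δ) :
    (∀ x y, classLe δ x y → classLe δ y x → δ x y) ↔ ClosedCycles δ := by
  simp only [classLe_iff_reflTransGen h.1]
  constructor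
  · intro hanti l hl _ hcyc a ha b hb
    exact hanti a b (hl.reflTransGen_of_head?_eq_getLast? hcyc ha hb)
      (hl.reflTransGen_of_head?_eq_getLast? hcyc hb ha)
  · intro hclosed x y hxy hyx
    obtain ⟨l, hl, hlen, hcyc, hx, hy⟩ :=
      List.exists_isChain_cycle_of_reflTransGen lstep_refl hxy hyx
    exact hclosed l hl hlen hcyc x hx y hy
end

section
/- Let δ be a local congruence on a lattice L and suppose classes [x]_δ and [y]_δ satisfy [x]_δ ≼_δ [y]_δ and [y]_δ ≼_δ [x]_δ witnessed by actual order inequalities: there exist x₁, x₂ ∈ [x]_δ and y₁, y₂ ∈ [y]_δ with x₁ ≤ y₁ and y₂ ≤ x₂. Then [x]_δ = [y]_δ. -/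
variable {L : Type*}

namespace LocalCong

variable [Lattice L] {δ : L → L → Prop}

theorem rel_sup_s14 (h : LocalCong δ) {x a b : L} (ha : δ x a) (hb : δ x b) : δ x (a ⊔ b) :=
  (h.2.1 x a b ha hb).1

theorem rel_of_le_of_le (h : LocalCong δ) {x a b c : L} (ha : δ x a) (hb : δ x b)
    (hac : a ≤ c) (hcb : c ≤ b) : δ x c :=
  h.2.2 x a b c ha hb hac hcb

theorem rel_sup_of_le (h : LocalCong δ) {x a b c : L} (ha : δ x a) (hb : δ x b) (hcb : c ≤ b) :
    δ x (a ⊔ c) :=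
  h.rel_of_le_of_le ha (h.rel_sup_s14 ha hb) le_sup_left (sup_le_sup_left hcb a)

end LocalCong

theorem stmt14 [Lattice L] (δ : L → L → Prop) (h : LocalCong δ)
    (x y x₁ x₂ y₁ y₂ : L)
    (hx₁ : δ x x₁) (hx₂ : δ x x₂) (hy₁ : δ y y₁) (hy₂ : δ y y₂)
    (h₁ : x₁ ≤ y₁) (h₂ : y₂ ≤ x₂) :
    δ x y := by
  have hx : δ x (x₁ ⊔ y₂) := h.rel_sup_of_le hx₁ hx₂ h₂
  have hy : δ y (x₁ ⊔ y₂) := sup_comm y₂ x₁ ▸ h.rel_sup_of_le hy₂ hy₁ h₁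
  exact h.1.trans hx (h.1.symm hy)
end

section
/- Given a formal context (A, B, R), a subset D ⊆ A, and the equivalence relation ρ_D on the concept lattice (concepts related iff X₁^{↑_D↓} = X₂^{↑_D↓}), each equivalence class [(X,Y)]_D is a join-semilattice whose maximum element is the concept (X^{↑_D↓}, X^{↑_D↓↑}). -/
/-!
Since `X^{↑_D} = D ∩ X^↑`, the Galois identity `↑↓↑ = ↑` gives `X^{↑_D↓↑_D} = X^{↑_D}` and
`X^{↑↓↑_D} = X^{↑_D}`. So all members of a class share the same `↑_D`, each lies below the
class's common closure `X^{↑_D↓}`, which is itself in the class, and the join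
`(X₁ ∪ X₂)^{↑↓}` of two members has `↑_D` equal to `X₁^{↑_D} ∩ X₂^{↑_D} = X^{↑_D}`.
-/

variable {A B : Type*}

def upOp (R : A → B → Prop) (X : Set B) : Set A := {a | ∀ x ∈ X, R a x}

def downOp (R : A → B → Prop) (Y : Set A) : Set B := {b | ∀ a ∈ Y, R a b}

def upD (R : A → B → Prop) (D : Set A) (X : Set B) : Set A :=
  {a | a ∈ D ∧ ∀ x ∈ X, R a x}

def IsConcept (R : A → B → Prop) (p : Set B × Set A) : Prop :=
  upOp R p.1 = p.2 ∧ downOp R p.2 = p.1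

section
variable (R : A → B → Prop) (D : Set A)

theorem upOp_eq_lowerPolar : upOp R = lowerPolar R := rfl

theorem downOp_eq_upperPolar : downOp R = upperPolar R := rfl

theorem upD_eq_inter_upOp (X : Set B) : upD R D X = D ∩ upOp R X := rfl

theorem isConcept_downOp_upOp_downOp (Y : Set A) :
    IsConcept R (downOp R Y, upOp R (downOp R Y)) :=
  ⟨rfl, upperPolar_lowerPolar_upperPolar R Y⟩

theorem subset_downOp_upD (X : Set B) : X ⊆ downOp R (upD R D X) :=
  fun _ hx _ ha => ha.2 _ hx

theorem upD_downOp_upD (X : Set B) : upD R D (downOp R (upD R D X)) = upD R D X := by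
  refine Set.Subset.antisymm ?_ ?_
  · exact Set.inter_subset_inter_right D (lowerPolar_anti R (subset_downOp_upD R D X))
  · exact Set.subset_inter Set.inter_subset_left (subset_lowerPolar_upperPolar R _)

theorem upD_downOp_upOp (X : Set B) : upD R D (downOp R (upOp R X)) = upD R D X := by
  rw [upD_eq_inter_upOp, upD_eq_inter_upOp, upOp_eq_lowerPolar, downOp_eq_upperPolar,
    lowerPolar_upperPolar_lowerPolar]

theorem upD_union (X Y : Set B) : upD R D (X ∪ Y) = upD R D X ∩ upD R D Y := by
  rw [upD_eq_inter_upOp, upD_eq_inter_upOp, upD_eq_inter_upOp, upOp_eq_lowerPolar,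
    lowerPolar_union, Set.inter_inter_distrib_left]

theorem upD_eq_of_downOp_upD_eq {X Y : Set B}
    (h : downOp R (upD R D X) = downOp R (upD R D Y)) : upD R D X = upD R D Y := by
  rw [← upD_downOp_upD R D X, h, upD_downOp_upD]

end

theorem stmt17 (R : A → B → Prop) (D : Set A)
    (c : {p : Set B × Set A // IsConcept R p}) :
    IsConcept R (downOp R (upD R D c.1.1), upOp R (downOp R (upD R D c.1.1))) ∧
    downOp R (upD R D (downOp R (upD R D c.1.1))) = downOp R (upD R D c.1.1) ∧
    (∀ c' : {p : Set B × Set A // IsConcept R p},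
      downOp R (upD R D c'.1.1) = downOp R (upD R D c.1.1) →
        c'.1.1 ⊆ downOp R (upD R D c.1.1)) ∧
    (∀ c₁ c₂ : {p : Set B × Set A // IsConcept R p},
      downOp R (upD R D c₁.1.1) = downOp R (upD R D c.1.1) →
      downOp R (upD R D c₂.1.1) = downOp R (upD R D c.1.1) →
        downOp R (upD R D (downOp R (upOp R (c₁.1.1 ∪ c₂.1.1)))) =
          downOp R (upD R D c.1.1)) := by
  refine ⟨isConcept_downOp_upOp_downOp R _, by rw [upD_downOp_upD], ?_, ?_⟩
  · intro c' h
    exact h ▸ subset_downOp_upD R D c'.1.1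
  · intro c₁ c₂ h₁ h₂
    rw [upD_downOp_upOp, upD_union, upD_eq_of_downOp_upD_eq R D h₁,
      upD_eq_of_downOp_upD_eq R D h₂, Set.inter_self]
end
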